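/- arXiv:1108.1679 — 4 statements merged into one kernel-verified Lean document; each statement's English description precedes it below -/
import Mathlib

section
/- Let β ≥ 2 be an integer and S = {βn : n ∈ ℤ_{>0}}. If (x,y) is a legal position of 2-pile S-Nim with (x,y) ≠ (0,0) such that {x,y} ≠ {β(n+t), βn+t} for all integers n ≥ 0 and 1 ≤ t ≤ β−1, then there exists a legal move from (x,y) to a position (x',y') such that either (x',y') = (0,0) or {x',y'} = {β(m+s), βm+s} for some integers m ≥ 0 and 1 ≤ s ≤ β−1. -/
/-- A Nim move on two heaps: strictly decrease exactly one coordinate. -/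
def Move (p q : ℕ × ℕ) : Prop :=
  (q.1 < p.1 ∧ q.2 = p.2) ∨ (q.1 = p.1 ∧ q.2 < p.2)

/-- A position of 2-pile S-Nim is legal if at least one heap is "black",
i.e. its size lies in `S` or it is empty. -/
def Legal (S : Set ℕ) (p : ℕ × ℕ) : Prop :=
  p.1 ∈ S ∪ {0} ∨ p.2 ∈ S ∪ {0}

lemma mul_pred_add (β a : ℕ) (ha : 1 ≤ a) : β * (a - 1) + β = β * a := by
  calc β * (a - 1) + β = β * ((a - 1) + 1) := by ring
  _ = β * a := by rw [Nat.sub_add_cancel ha]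

lemma key (β : ℕ) (hβ : 2 ≤ β) (a y : ℕ)
    (hne : ¬ (β * a = 0 ∧ y = 0))
    (hform : ¬ ∃ n t : ℕ, 1 ≤ t ∧ t ≤ β - 1 ∧
        ((β * a = β * (n + t) ∧ y = β * n + t) ∨
         (β * a = β * n + t ∧ y = β * (n + t)))) :
    ∃ x' y' : ℕ, Move (β * a, y) (x', y') ∧
      ((∃ c, x' = β * c) ∨ (∃ c, y' = β * c)) ∧
      ((x' = 0 ∧ y' = 0) ∨
        ∃ m s : ℕ, 1 ≤ s ∧ s ≤ β - 1 ∧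
          ((x' = β * (m + s) ∧ y' = β * m + s) ∨
           (x' = β * m + s ∧ y' = β * (m + s)))) := by
  rcases Nat.eq_zero_or_pos a with ha | ha
  · -- a = 0, so x = 0 and y > 0; move to (0,0)
    subst ha
    have hy : 0 < y := by
      rcases Nat.eq_zero_or_pos y with h | h
      · exact absurd ⟨by ring, h⟩ hne
      · exact h
    exact ⟨0, 0, Or.inr ⟨by simp, hy⟩, Or.inl ⟨0, by ring⟩, Or.inl ⟨rfl, rfl⟩⟩
  · obtain ⟨q, r, hy, hr⟩ : ∃ q r : ℕ, y = β * q + r ∧ r < β :=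
      ⟨y / β, y % β, (Nat.div_add_mod y β).symm, Nat.mod_lt y (by omega)⟩
    rcases Nat.eq_zero_or_pos r with hr0 | hr1
    · -- y is a multiple of β
      rcases Nat.eq_zero_or_pos q with hq0 | hq1
      · -- y = 0, move x to 0
        have hy0 : y = 0 := by rw [hy, hq0, hr0]; ring
        refine ⟨0, 0, Or.inl ⟨?_, hy0.symm⟩, Or.inl ⟨0, by ring⟩, Or.inl ⟨rfl, rfl⟩⟩
        simpa using Nat.mul_pos (by omega : 0 < β) ha
      · rcases le_or_gt a q with hle | hlt
        · -- keep x = βa, move y down to β(a-1)+1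
          refine ⟨β * a, β * (a - 1) + 1, Or.inr ⟨rfl, ?_⟩, Or.inl ⟨a, rfl⟩,
            Or.inr ⟨a - 1, 1, le_refl 1, by omega, Or.inl ⟨by rw [Nat.sub_add_cancel ha], rfl⟩⟩⟩
          have h1 := mul_pred_add β a ha
          have h2 : β * a ≤ β * q := Nat.mul_le_mul_left β hle
          show β * (a - 1) + 1 < y
          omega
        · -- keep y = βq, move x down to β(q-1)+1
          refine ⟨β * (q - 1) + 1, y, Or.inl ⟨?_, rfl⟩, Or.inr ⟨q, by omega⟩,
            Or.inr ⟨q - 1, 1, le_refl 1, by omega, Or.inr ⟨rfl, by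
              rw [Nat.sub_add_cancel hq1]; omega⟩⟩⟩
          have h1 := mul_pred_add β q hq1
          have h2 : β * q ≤ β * (a - 1) := Nat.mul_le_mul_left β (by omega)
          have h3 := mul_pred_add β a ha
          omega
    · -- r ≥ 1
      rcases lt_trichotomy (q + r) a with hlt | heq | hgt
      · -- move x down to β(q+r)
        exact ⟨β * (q + r), y, Or.inl ⟨mul_lt_mul_of_pos_left hlt (by omega : 0 < β), rfl⟩,
          Or.inl ⟨q + r, rfl⟩, Or.inr ⟨q, r, hr1, by omega, Or.inl ⟨rfl, hy⟩⟩⟩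
      · exact absurd ⟨q, r, hr1, by omega, Or.inl ⟨by rw [heq], hy⟩⟩ hform
      · -- move y down to β(a-s)+s with s = min a (β-1)
        rcases le_or_gt a (β - 1) with hab | hba
        · -- s = a, m = 0
          have hylt : β * 0 + a < y := by
            rcases Nat.eq_zero_or_pos q with hq0 | hq1
            · subst hq0; omega
            · have h1 : β * 1 ≤ β * q := Nat.mul_le_mul_left β hq1
              have h2 : β * 1 = β := by ring
              have h3 : β * 0 = 0 := by ring
              omega
          exact ⟨β * a, β * 0 + a, Or.inr ⟨rfl, hy ▸ hylt⟩, Or.inl ⟨a, rfl⟩,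
            Or.inr ⟨0, a, ha, hab, Or.inl ⟨by ring, rfl⟩⟩⟩
        · -- s = β - 1, m = a - (β - 1)
          set m := a - (β - 1) with hm
          have hms : m + (β - 1) = a := by omega
          have hqm : m + 1 ≤ q := by omega
          have h1 : β * (m + 1) ≤ β * q := Nat.mul_le_mul_left β hqm
          have h2 : β * (m + 1) = β * m + β := by ring
          have hylt : β * m + (β - 1) < y := by omega
          exact ⟨β * a, β * m + (β - 1), Or.inr ⟨rfl, hylt⟩, Or.inl ⟨a, rfl⟩,
            Or.inr ⟨m, β - 1, by omega, le_refl _, Or.inl ⟨by rw [hms], rfl⟩⟩⟩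
lemma memS (β : ℕ) (c x : ℕ) (h : x = β * c) :
    x ∈ {m | ∃ n : ℕ, 0 < n ∧ m = β * n} ∪ {0} := by
  rcases Nat.eq_zero_or_pos c with hc | hc
  · right; simp [h, hc]
  · left; exact ⟨c, hc, h⟩

/-- from any legal nonzero position not of the form
`{β(n+t), βn+t}` there is a legal move to `(0,0)` or to a position of that form. -/
theorem stmt2 (β : ℕ) (hβ : 2 ≤ β)
    (S : Set ℕ) (hS : S = {m | ∃ n : ℕ, 0 < n ∧ m = β * n})
    (x y : ℕ) (hleg : Legal S (x, y)) (hne : (x, y) ≠ (0, 0))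
    (hform : ¬ ∃ n t : ℕ, 1 ≤ t ∧ t ≤ β - 1 ∧
        ((x = β * (n + t) ∧ y = β * n + t) ∨
         (x = β * n + t ∧ y = β * (n + t)))) :
    ∃ x' y' : ℕ, Move (x, y) (x', y') ∧ Legal S (x', y') ∧
      ((x', y') = (0, 0) ∨
        ∃ m s : ℕ, 1 ≤ s ∧ s ≤ β - 1 ∧
          ((x' = β * (m + s) ∧ y' = β * m + s) ∨
           (x' = β * m + s ∧ y' = β * (m + s)))) := by
  subst hS
  have hne' : ¬ (x = 0 ∧ y = 0) := by
    intro ⟨h1, h2⟩; exact hne (by rw [h1, h2])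
  have hmul : (∃ a, x = β * a) ∨ (∃ b, y = β * b) := by
    rcases hleg with h | h <;> [left; right] <;>
    · rcases h with h | h
      · obtain ⟨n, _, hn⟩ := h; exact ⟨n, hn⟩
      · exact ⟨0, by simpa using h⟩
  rcases hmul with ⟨a, rfl⟩ | ⟨b, rfl⟩
  · obtain ⟨x', y', hmv, hmul', hfm⟩ := key β hβ a y hne' hform
    refine ⟨x', y', hmv, ?_, ?_⟩
    · rcases hmul' with ⟨c, hc⟩ | ⟨c, hc⟩
      · exact Or.inl (memS β c x' hc)
      · exact Or.inr (memS β c y' hc)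
    · rcases hfm with ⟨h1, h2⟩ | h
      · exact Or.inl (by rw [h1, h2])
      · exact Or.inr h
  · have hform' : ¬ ∃ n t : ℕ, 1 ≤ t ∧ t ≤ β - 1 ∧
        ((β * b = β * (n + t) ∧ x = β * n + t) ∨
         (β * b = β * n + t ∧ x = β * (n + t))) := by
      rintro ⟨n, t, h1, h2, h3 | h3⟩
      · exact hform ⟨n, t, h1, h2, Or.inr ⟨h3.2, h3.1⟩⟩
      · exact hform ⟨n, t, h1, h2, Or.inl ⟨h3.2, h3.1⟩⟩
    obtain ⟨x', y', hmv, hmul', hfm⟩ := key β hβ b x (fun ⟨h1, h2⟩ => hne' ⟨h2, h1⟩) hform'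
    refine ⟨y', x', ?_, ?_, ?_⟩
    · rcases hmv with ⟨h1, h2⟩ | ⟨h1, h2⟩
      · exact Or.inr ⟨h2, h1⟩
      · exact Or.inl ⟨h2, h1⟩
    · rcases hmul' with ⟨c, hc⟩ | ⟨c, hc⟩
      · exact Or.inr (memS β c x' hc)
      · exact Or.inl (memS β c y' hc)
    · rcases hfm with ⟨h1, h2⟩ | ⟨m, s, h1, h2, h3 | h3⟩
      · exact Or.inl (by rw [h1, h2])
      · exact Or.inr ⟨m, s, h1, h2, Or.inr ⟨h3.2, h3.1⟩⟩
      · exact Or.inr ⟨m, s, h1, h2, Or.inl ⟨h3.2, h3.1⟩⟩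
end

section
/- Let β > 2 be irrational, let α satisfy 1/α + 1/β = 1, and let S = {⌊βn⌋ : n ∈ ℤ_{>0}}. A legal position (x,y) of 2-pile S-Nim is a P-position if and only if {x,y} = {⌊αn⌋, ⌊βn⌋} for some integer n ≥ 0. -/
/-- P-positions of 2-pile S-Nim, by well-founded recursion on the total heap size:
a position is a P-position iff every legal move from it leads to a non-P-position. -/
def PPos (S : Set ℕ) (p : ℕ × ℕ) : Prop :=
  ∀ q, Move p q → Legal S q → ¬ PPos S q
termination_by p.1 + p.2
decreasing_by
  rename_i h _
  rcases h with ⟨h1, h2⟩ | ⟨h1, h2⟩ <;> omega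

/-!
Write `a n = ⌊α n⌋` and `b n = ⌊β n⌋`. By Rayleigh's theorem `(a n)_{n>0}` and `(b n)_{n>0}`
partition the positive integers; both are strictly increasing, and `a ≤ b` because `α < 2 < β`.
So a heap size determines the pair `{a n, b n}` it belongs to, and no Nim move joins two such
pairs. Conversely, from a legal position `(x, b m)` outside the pairs one moves to `(a m, b m)`
if `x > a m`; if `x < a m`, then `x` is `0`, some `a k` or some `b k` with `k < m`, and one lowers
`b m` to the partner of `x`, which is smaller than `b m` because `a ≤ b`. A set of positions
that is stable and absorbing in this sense is exactly the set of legal P-positions.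
-/

theorem exists_beattySeq_eq_iff {r : ℝ} (hr : 0 ≤ r) (x : ℕ) :
    (∃ k > 0, beattySeq r k = x) ↔ ∃ k : ℕ, 0 < k ∧ ⌊r * k⌋₊ = x := by
  have hseq (k : ℕ) : beattySeq r k = (⌊r * k⌋₊ : ℤ) := by
    rw [beattySeq, Int.cast_natCast, mul_comm, Int.natCast_floor_eq_floor (by positivity)]
  constructor
  · rintro ⟨k, hk, hkx⟩
    lift k to ℕ using hk.le
    exact ⟨k, by exact_mod_cast hk, by exact_mod_cast (hseq k).symm.trans hkx⟩
  · rintro ⟨k, hk, rfl⟩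
    exact ⟨k, by exact_mod_cast hk, hseq k⟩

theorem Irrational.xor_exists_natFloor_mul_eq {r s : ℝ} (hrs : r.HolderConjugate s)
    (hr : Irrational r) {x : ℕ} (hx : 0 < x) :
    Xor (∃ k : ℕ, 0 < k ∧ ⌊r * k⌋₊ = x) (∃ k : ℕ, 0 < k ∧ ⌊s * k⌋₊ = x) := by
  have hmem : (x : ℤ) ∈ {n : ℤ | 0 < n} := Int.natCast_pos.mpr hx
  rw [← hr.beattySeq_symmDiff_beattySeq_pos hrs, Set.mem_symmDiff] at hmem
  simp only [Set.mem_ofPred_eq, exists_beattySeq_eq_iff hrs.pos.le,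
    exists_beattySeq_eq_iff hrs.symm.pos.le] at hmem
  exact hmem

theorem strictMono_natFloor_mul {r : ℝ} (hr : 1 ≤ r) : StrictMono fun n : ℕ ↦ ⌊r * n⌋₊ := by
  refine strictMono_nat_of_lt_succ fun n ↦ ?_
  calc ⌊r * n⌋₊ < ⌊r * n⌋₊ + 1 := Nat.lt_succ_self _
    _ = ⌊r * n + 1⌋₊ := (Nat.floor_add_one (by positivity)).symm
    _ ≤ ⌊r * (n + 1 : ℕ)⌋₊ := Nat.floor_le_floor (by push_cast; nlinarith)

theorem Real.HolderConjugate.lt_of_two_lt {p q : ℝ} (h : p.HolderConjugate q) (hq : 2 < q) :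
    p < q := by
  have hq' : q⁻¹ < 2⁻¹ := inv_strictAnti₀ two_pos hq
  have hp : p < 2 := (inv_lt_inv₀ two_pos h.pos).mp (by linarith [h.inv_add_inv_eq_one])
  linarith

theorem Move.swap {p q : ℕ × ℕ} (h : Move p q) : Move p.swap q.swap := by
  unfold Move at h ⊢
  simp only [Prod.fst_swap, Prod.snd_swap]
  tauto

theorem Legal.swap {S : Set ℕ} {p : ℕ × ℕ} (h : Legal S p) : Legal S p.swap :=
  Or.symm h

theorem Move.sum_lt {p q : ℕ × ℕ} (h : Move p q) : q.1 + q.2 < p.1 + p.2 := by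
  unfold Move at h
  omega

theorem pPos_iff_mem_of_stable_of_absorbing {S : Set ℕ} (P : Set (ℕ × ℕ))
    (hstable : ∀ p ∈ P, ∀ q ∈ P, ¬ Move p q)
    (habsorbing : ∀ p, Legal S p → p ∉ P → ∃ q ∈ P, Move p q ∧ Legal S q)
    {p : ℕ × ℕ} (hp : Legal S p) : PPos S p ↔ p ∈ P := by
  induction h : p.1 + p.2 using Nat.strong_induction_on generalizing p with
  | _ n ih =>
    have ih' : ∀ q, Move p q → Legal S q → (PPos S q ↔ q ∈ P) := fun q hmove hq ↦
      ih _ (h ▸ hmove.sum_lt) hq rfl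
    rw [PPos]
    constructor
    · intro hP
      by_contra hpP
      obtain ⟨q, hqP, hmove, hq⟩ := habsorbing p hp hpP
      exact hP q hmove hq ((ih' q hmove hq).2 hqP)
    · intro hpP q hmove hq hPq
      exact hstable p hpP q ((ih' q hmove hq).1 hPq) hmove

def pairsOf (a b : ℕ → ℕ) : Set (ℕ × ℕ) :=
  {p | ∃ n, p = (a n, b n) ∨ p = (b n, a n)}

namespace pairsOf

variable {a b : ℕ → ℕ}

theorem swap_mem {p : ℕ × ℕ} (hp : p ∈ pairsOf a b) : p.swap ∈ pairsOf a b := by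
  obtain ⟨n, rfl | rfl⟩ := hp
  exacts [⟨n, Or.inr rfl⟩, ⟨n, Or.inl rfl⟩]

theorem mk_mem (n : ℕ) : (a n, b n) ∈ pairsOf a b := ⟨n, Or.inl rfl⟩

theorem mk_mem' (n : ℕ) : (b n, a n) ∈ pairsOf a b := ⟨n, Or.inr rfl⟩

theorem apply_mem_image_union_zero (n : ℕ) (hb0 : b 0 = 0) : b n ∈ b '' Set.Ioi 0 ∪ {0} := by
  rcases Nat.eq_zero_or_pos n with rfl | hn
  exacts [Or.inr hb0, Or.inl ⟨n, hn, rfl⟩]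

theorem exists_apply_eq_of_mem_image_union_zero {x : ℕ} (hb0 : b 0 = 0)
    (hx : x ∈ b '' Set.Ioi 0 ∪ {0}) : ∃ n, b n = x := by
  rcases hx with ⟨n, -, rfl⟩ | rfl
  exacts [⟨n, rfl⟩, ⟨0, hb0⟩]

variable (ha : StrictMono a) (hb : StrictMono b) (ha0 : a 0 = 0) (hb0 : b 0 = 0)
  (hcompl : ∀ x, 0 < x → Xor (∃ k, 0 < k ∧ a k = x) (∃ k, 0 < k ∧ b k = x))
include ha hb ha0 hb0 hcompl

theorem eq_zero_of_apply_eq_apply {m n : ℕ} (h : a m = b n) : m = 0 ∧ n = 0 := by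
  rcases Nat.eq_zero_or_pos m with rfl | hm
  · exact ⟨rfl, hb.injective (by rw [← h, ha0, hb0])⟩
  rcases Nat.eq_zero_or_pos n with rfl | hn
  · exact absurd (ha.injective (h.trans (hb0.trans ha0.symm))) hm.ne'
  have hpos : 0 < a m := ha0 ▸ ha hm
  rcases hcompl (a m) hpos with ⟨-, hnot⟩ | ⟨-, hnot⟩
  · exact absurd ⟨n, hn, h.symm⟩ hnot
  · exact absurd ⟨m, hm, rfl⟩ hnot

theorem eq_of_fst_eq {p q : ℕ × ℕ} (hp : p ∈ pairsOf a b) (hq : q ∈ pairsOf a b)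
    (h : p.1 = q.1) : p = q := by
  obtain ⟨n, rfl | rfl⟩ := hp <;> obtain ⟨m, rfl | rfl⟩ := hq
  · rw [ha.injective h]
  · obtain ⟨rfl, rfl⟩ := eq_zero_of_apply_eq_apply ha hb ha0 hb0 hcompl h
    rw [ha0, hb0]
  · obtain ⟨rfl, rfl⟩ := eq_zero_of_apply_eq_apply ha hb ha0 hb0 hcompl h.symm
    rw [ha0, hb0]
  · rw [hb.injective h]

theorem not_move {p q : ℕ × ℕ} (hp : p ∈ pairsOf a b) (hq : q ∈ pairsOf a b) :
    ¬ Move p q := by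
  rintro (⟨hlt, heq⟩ | ⟨heq, hlt⟩)
  · have := eq_of_fst_eq ha hb ha0 hb0 hcompl (swap_mem hp) (swap_mem hq) heq.symm
    rw [Prod.swap_inj] at this
    exact hlt.ne (congrArg Prod.fst this).symm
  · exact hlt.ne (congrArg Prod.snd (eq_of_fst_eq ha hb ha0 hb0 hcompl hp hq heq.symm)).symm

theorem exists_move_of_snd_eq (hab : ∀ n, a n ≤ b n) {x m : ℕ}
    (hx : (x, b m) ∉ pairsOf a b) :
    ∃ q ∈ pairsOf a b, Move (x, b m) q ∧ Legal (b '' Set.Ioi 0) q := by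
  have hmem := fun n ↦ apply_mem_image_union_zero (b := b) n hb0
  rcases lt_trichotomy x (a m) with hlt | rfl | hgt
  · have hm : 0 < m := Nat.pos_of_ne_zero fun hm ↦ by simp [hm, ha0] at hlt
    rcases Nat.eq_zero_or_pos x with rfl | hx0
    · exact ⟨(a 0, b 0), mk_mem 0, Or.inr ⟨ha0, hb hm⟩, Or.inr (hmem 0)⟩
    rcases (hcompl x hx0).or with ⟨k, -, rfl⟩ | ⟨k, -, rfl⟩
    · exact ⟨(a k, b k), mk_mem k, Or.inr ⟨rfl, hb (ha.lt_iff_lt.mp hlt)⟩, Or.inr (hmem k)⟩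
    · exact ⟨(b k, a k), mk_mem' k, Or.inr ⟨rfl, (hab k).trans_lt (hlt.trans_le (hab m))⟩,
        Or.inl (hmem k)⟩
  · exact absurd (mk_mem m) hx
  · exact ⟨(a m, b m), mk_mem m, Or.inl ⟨hgt, rfl⟩, Or.inr (hmem m)⟩

theorem exists_move_of_notMem (hab : ∀ n, a n ≤ b n) {p : ℕ × ℕ}
    (hp : Legal (b '' Set.Ioi 0) p) (hnot : p ∉ pairsOf a b) :
    ∃ q ∈ pairsOf a b, Move p q ∧ Legal (b '' Set.Ioi 0) q := by
  obtain ⟨x, y⟩ := p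
  rcases hp with hx | hy
  · obtain ⟨m, rfl⟩ := exists_apply_eq_of_mem_image_union_zero hb0 hx
    obtain ⟨q, hq, hmove, hlegal⟩ := exists_move_of_snd_eq ha hb ha0 hb0 hcompl hab
      (x := y) (m := m) fun h ↦ hnot (swap_mem h)
    exact ⟨q.swap, swap_mem hq, hmove.swap, hlegal.swap⟩
  · obtain ⟨m, rfl⟩ := exists_apply_eq_of_mem_image_union_zero hb0 hy
    exact exists_move_of_snd_eq ha hb ha0 hb0 hcompl hab hnot

theorem pPos_iff_mem (hab : ∀ n, a n ≤ b n) {p : ℕ × ℕ} (hp : Legal (b '' Set.Ioi 0) p) :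
    PPos (b '' Set.Ioi 0) p ↔ p ∈ pairsOf a b :=
  pPos_iff_mem_of_stable_of_absorbing _
    (fun _ hp₁ _ hp₂ ↦ not_move ha hb ha0 hb0 hcompl hp₁ hp₂)
    (fun _ hq hnot ↦ exists_move_of_notMem ha hb ha0 hb0 hcompl hab hq hnot) hp

end pairsOf

theorem natCast_eq_floor_iff {r : ℝ} (hr : 0 ≤ r) (m : ℕ) : (m : ℤ) = ⌊r⌋ ↔ ⌊r⌋₊ = m := by
  rw [← Int.natCast_floor_eq_floor hr]
  omega

theorem pPos_iff_mem_pairsOf_natFloor {α β : ℝ} (hβα : β.HolderConjugate α) (hβ : 2 < β)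
    (hirr : Irrational β) {p : ℕ × ℕ} (hp : Legal ((fun n : ℕ ↦ ⌊β * n⌋₊) '' Set.Ioi 0) p) :
    PPos ((fun n : ℕ ↦ ⌊β * n⌋₊) '' Set.Ioi 0) p ↔
      p ∈ pairsOf (fun n : ℕ ↦ ⌊α * n⌋₊) (fun n : ℕ ↦ ⌊β * n⌋₊) :=
  pairsOf.pPos_iff_mem (strictMono_natFloor_mul hβα.symm.lt.le)
    (strictMono_natFloor_mul hβα.lt.le) (by simp) (by simp)
    (fun _ hx ↦ xor_comm _ _ ▸ hirr.xor_exists_natFloor_mul_eq hβα hx)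
    (fun n ↦ Nat.floor_le_floor (by gcongr; exact (hβα.symm.lt_of_two_lt hβ).le)) hp

/-- Theorem 2 of the paper: for an irrational `β > 2`,
`α` with `1/α + 1/β = 1`, and `S = {⌊βn⌋ : n > 0}`, a legal position `(x,y)` of
2-pile S-Nim is a P-position iff, up to order, `(x,y) = (⌊αn⌋, ⌊βn⌋)` for some `n ≥ 0`. -/
theorem stmt5 (β : ℝ) (hβ : 2 < β) (hirr : Irrational β)
    (α : ℝ) (hα : 1 / α + 1 / β = 1)
    (S : Set ℕ) (hS : S = {m : ℕ | ∃ n : ℕ, 0 < n ∧ (m : ℤ) = ⌊β * n⌋})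
    (x y : ℕ) (hleg : Legal S (x, y)) :
    PPos S (x, y) ↔
      ∃ n : ℕ, ((x : ℤ) = ⌊α * n⌋ ∧ (y : ℤ) = ⌊β * n⌋) ∨
               ((x : ℤ) = ⌊β * n⌋ ∧ (y : ℤ) = ⌊α * n⌋) := by
  have hβα : β.HolderConjugate α :=
    Real.holderConjugate_iff.mpr ⟨by linarith, by simpa only [one_div, add_comm] using hα⟩
  have hcast (r : ℝ) (hr : 0 ≤ r) (n m : ℕ) : (m : ℤ) = ⌊r * n⌋ ↔ ⌊r * n⌋₊ = m :=
    natCast_eq_floor_iff (by positivity) m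
  have hS' : S = (fun n : ℕ ↦ ⌊β * n⌋₊) '' Set.Ioi 0 := by
    ext m
    simp [hS, hcast β hβα.pos.le]
  rw [hS'] at hleg ⊢
  rw [pPos_iff_mem_pairsOf_natFloor hβα hβ hirr hleg]
  simp [pairsOf, hcast α hβα.symm.pos.le, hcast β hβα.pos.le, eq_comm]
end

section
/- Let β > 2 be irrational and let α satisfy 1/α + 1/β = 1. For all nonnegative integers m ≠ n, the sets {⌊αm⌋, ⌊βm⌋} and {⌊αn⌋, ⌊βn⌋} are disjoint; consequently, no position (⌊αm⌋, ⌊βm⌋) can be obtained from (⌊αn⌋, ⌊βn⌋) with m ≠ n by strictly decreasing exactly one coordinate (in either order of the coordinates). -/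
theorem Move.ne_of_fst_ne_of_snd_ne {p q r : ℕ × ℕ} (h : Move p q) (h₁ : p.1 ≠ r.1)
    (h₂ : p.2 ≠ r.2) : q ≠ r := by
  rintro rfl
  rcases h with ⟨-, h⟩ | ⟨h, -⟩
  · exact h₂ h.symm
  · exact h₁ h.symm

theorem beattySeq_natCast (r : ℝ) (n : ℕ) : beattySeq r n = ⌊r * n⌋ := by
  simp [beattySeq, mul_comm]

theorem beattySeq_strictMono {r : ℝ} (hr : 1 ≤ r) : StrictMono (beattySeq r) := by
  refine strictMono_int_of_lt_succ fun k ↦ ?_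
  calc beattySeq r k < ⌊k * r + 1⌋ := by rw [Int.floor_add_one]; exact lt_add_one _
    _ ≤ beattySeq r (k + 1) := Int.floor_mono (by push_cast; linarith)

theorem Irrational.beattySeq'_eq_beattySeq {r : ℝ} (hr : Irrational r) {k : ℤ} (hk : k ≠ 0) :
    beattySeq' r k = beattySeq r k := by
  have hnot : (k * r : ℝ) ∉ Set.range Int.cast :=
    fun ⟨j, hj⟩ ↦ (hr.intCast_mul hk).ne_int j hj.symm
  rw [beattySeq', beattySeq, (Int.ceil_eq_floor_add_one_iff_notMem _).mpr hnot,
    add_sub_cancel_right]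

theorem beattySeq_eq_beattySeq_iff {r s : ℝ} (hrs : r.HolderConjugate s) (hs : Irrational s)
    {j k : ℤ} : beattySeq r j = beattySeq s k ↔ j = 0 ∧ k = 0 := by
  refine ⟨fun h ↦ ?_, by rintro ⟨rfl, rfl⟩; simp [beattySeq]⟩
  obtain rfl : k = 0 := by
    by_contra hk
    have hcompl : beattySeq s k ∈ {beattySeq r k | k}ᶜ := by
      rw [compl_beattySeq hrs, ← hs.beattySeq'_eq_beattySeq hk]
      exact ⟨k, rfl⟩
    exact hcompl ⟨j, h⟩
  refine ⟨(beattySeq_strictMono hrs.lt.le).injective ?_, rfl⟩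
  simpa [beattySeq] using h

theorem floor_mul_natCast_injective {r : ℝ} (hr : 1 ≤ r) :
    Function.Injective fun n : ℕ ↦ ⌊r * n⌋ := fun a b h ↦ by
  have hab : beattySeq r a = beattySeq r b := by simpa only [beattySeq_natCast] using h
  exact_mod_cast (beattySeq_strictMono hr).injective hab

theorem floor_mul_natCast_ne_floor_mul_natCast {r s : ℝ} (hrs : r.HolderConjugate s)
    (hs : Irrational s) {a b : ℕ} (hab : a ≠ b) : ⌊r * a⌋ ≠ ⌊s * b⌋ := by
  rw [← beattySeq_natCast, ← beattySeq_natCast, Ne, beattySeq_eq_beattySeq_iff hrs hs]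
  omega

theorem Int.toNat_floor_ne_toNat_floor {x y : ℝ} (hx : 0 ≤ x) (hy : 0 ≤ y) (h : ⌊x⌋ ≠ ⌊y⌋) :
    ⌊x⌋.toNat ≠ ⌊y⌋.toNat := by
  have := Int.floor_nonneg.mpr hx
  have := Int.floor_nonneg.mpr hy
  omega

/-- for an irrational `β > 2` and `α` with `1/α + 1/β = 1`,
the pairs `{⌊αm⌋, ⌊βm⌋}` and `{⌊αn⌋, ⌊βn⌋}` are disjoint for `m ≠ n`; consequently,
no position `(⌊αm⌋, ⌊βm⌋)` (in either coordinate order) is obtained from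
`(⌊αn⌋, ⌊βn⌋)` with `m ≠ n` by a Nim move. -/
theorem stmt6 (β : ℝ) (hβ : 2 < β) (hirr : Irrational β)
    (α : ℝ) (hα : 1 / α + 1 / β = 1)
    (m n : ℕ) (hmn : m ≠ n) :
    (⌊α * m⌋ ≠ ⌊α * n⌋ ∧ ⌊α * m⌋ ≠ ⌊β * n⌋ ∧
     ⌊β * m⌋ ≠ ⌊α * n⌋ ∧ ⌊β * m⌋ ≠ ⌊β * n⌋) ∧
    (∀ q : ℕ × ℕ, Move ((⌊α * n⌋).toNat, (⌊β * n⌋).toNat) q →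
      q ≠ ((⌊α * m⌋).toNat, (⌊β * m⌋).toNat) ∧
      q ≠ ((⌊β * m⌋).toNat, (⌊α * m⌋).toNat)) := by
  have hconj : β.HolderConjugate α :=
    Real.holderConjugate_iff.mpr ⟨by linarith, by simpa only [one_div, add_comm] using hα⟩
  have hαα := (floor_mul_natCast_injective hconj.symm.lt.le).ne hmn
  have hαβ := floor_mul_natCast_ne_floor_mul_natCast hconj.symm hirr hmn
  have hβα := (floor_mul_natCast_ne_floor_mul_natCast hconj.symm hirr hmn.symm).symm
  have hββ := (floor_mul_natCast_injective hconj.lt.le).ne hmn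
  have hα0 : 0 ≤ α := hconj.symm.nonneg
  have hβ0 : 0 ≤ β := hconj.nonneg
  refine ⟨⟨hαα, hαβ, hβα, hββ⟩, fun q hq ↦
    ⟨hq.ne_of_fst_ne_of_snd_ne ?_ ?_, hq.ne_of_fst_ne_of_snd_ne ?_ ?_⟩⟩ <;>
    refine Int.toNat_floor_ne_toNat_floor (by positivity) (by positivity) ?_
  exacts [hαα.symm, hββ.symm, hβα.symm, hαβ.symm]
end

section
/- Let β > 2 be irrational, let α satisfy 1/α + 1/β = 1, and let S = {⌊βn⌋ : n ∈ ℤ_{>0}}. If (x,y) is a legal position of 2-pile S-Nim such that {x,y} ≠ {⌊αn⌋, ⌊βn⌋} for all integers n ≥ 0, then there exists a legal move from (x,y) to a position (x',y') with {x',y'} = {⌊αm⌋, ⌊βm⌋} for some integer m ≥ 0. -/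
lemma Move.swap_s7 {x y x' y' : ℕ} (h : Move (x, y) (x', y')) : Move (y, x) (y', x') :=
  h.symm.imp And.symm And.symm

def IsBeattyPosition (α β : ℝ) (x y : ℕ) : Prop :=
  ∃ m : ℕ, ((x : ℤ) = ⌊α * m⌋ ∧ (y : ℤ) = ⌊β * m⌋) ∨ ((x : ℤ) = ⌊β * m⌋ ∧ (y : ℤ) = ⌊α * m⌋)

lemma IsBeattyPosition.swap_s7 {α β : ℝ} {x y : ℕ} (h : IsBeattyPosition α β x y) :
    IsBeattyPosition α β y x :=
  h.imp fun _ hm => hm.symm.imp And.symm And.symm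

lemma Real.HolderConjugate.le_of_two_le {p q : ℝ} (h : p.HolderConjugate q) (hp : 2 ≤ p) :
    q ≤ p := by
  rw [← inv_le_inv₀ h.pos h.symm.pos]
  have hsum := h.inv_add_inv_eq_one
  have : p⁻¹ ≤ 2⁻¹ := inv_anti₀ two_pos hp
  linarith

lemma floor_mul_natCast_monotone {r : ℝ} (hr : 0 ≤ r) : Monotone fun n : ℕ => ⌊r * n⌋ :=
  fun _ _ h => Int.floor_le_floor (mul_le_mul_of_nonneg_left (Nat.cast_le.2 h) hr)

lemma floor_mul_natCast_strictMono {r : ℝ} (hr : 1 ≤ r) : StrictMono fun n : ℕ => ⌊r * n⌋ := by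
  refine strictMono_nat_of_lt_succ fun n => ?_
  calc ⌊r * n⌋ < ⌊r * n⌋ + 1 := lt_add_one _
    _ = ⌊r * n + 1⌋ := (Int.floor_add_one _).symm
    _ ≤ ⌊r * ↑(n + 1)⌋ := Int.floor_le_floor (by push_cast; linarith)

lemma exists_eq_floor_mul_or_exists_eq_floor_mul {r s : ℝ} (hrs : r.HolderConjugate s)
    (hr : Irrational r) (y : ℕ) :
    (∃ m : ℕ, (y : ℤ) = ⌊r * m⌋) ∨ ∃ m : ℕ, (y : ℤ) = ⌊s * m⌋ := by
  rcases y.eq_zero_or_pos with rfl | hy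
  · exact .inl ⟨0, by simp⟩
  have hy' : (y : ℤ) ∈ {n : ℤ | 0 < n} := Int.natCast_pos.2 hy
  rw [← hr.beattySeq_symmDiff_beattySeq_pos hrs] at hy'
  have of_beattySeq : ∀ t : ℝ, (y : ℤ) ∈ {beattySeq t k | k > 0} → ∃ m : ℕ, (y : ℤ) = ⌊t * m⌋ := by
    rintro t ⟨k, hk, hky⟩
    lift k to ℕ using hk.le
    exact ⟨k, by rw [← hky, beattySeq, mul_comm, Int.cast_natCast]⟩
  exact hy'.imp (fun h => of_beattySeq r h.1) (fun h => of_beattySeq s h.1)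

lemma mem_union_zero_iff {β : ℝ} {S : Set ℕ}
    (hS : S = {m : ℕ | ∃ n : ℕ, 0 < n ∧ (m : ℤ) = ⌊β * n⌋}) {x : ℕ} :
    x ∈ S ∪ {0} ↔ ∃ n : ℕ, (x : ℤ) = ⌊β * n⌋ := by
  subst hS
  constructor
  · rintro (⟨n, -, hn⟩ | rfl)
    exacts [⟨n, hn⟩, ⟨0, by simp⟩]
  · rintro ⟨n, hn⟩
    rcases n.eq_zero_or_pos with rfl | hpos
    · right
      simpa using hn
    · exact .inl ⟨n, hpos, hn⟩

lemma exists_move_to_isBeattyPosition {α β : ℝ} (hconj : β.HolderConjugate α) (hαβ : α ≤ β)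
    (hirr : Irrational β) {S : Set ℕ} (hS : S = {m : ℕ | ∃ n : ℕ, 0 < n ∧ (m : ℤ) = ⌊β * n⌋})
    {x y n : ℕ} (hx : (x : ℤ) = ⌊β * n⌋) (hy : (y : ℤ) ≠ ⌊α * n⌋) :
    ∃ x' y' : ℕ, Move (x, y) (x', y') ∧ Legal S (x', y') ∧ IsBeattyPosition α β x' y' := by
  have hα : 0 ≤ α := hconj.symm.nonneg
  have hβ : 0 ≤ β := hconj.nonneg
  have natCast_floor : ∀ {r : ℝ}, 0 ≤ r → ∀ m : ℕ, ((⌊r * m⌋₊ : ℕ) : ℤ) = ⌊r * m⌋ :=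
    fun hr m => Int.natCast_floor_eq_floor (by positivity)
  have hαn_le_x : ⌊α * n⌋ ≤ x := hx ▸ Int.floor_le_floor (by gcongr)
  rcases hy.lt_or_gt with hlt | hgt
  · rcases exists_eq_floor_mul_or_exists_eq_floor_mul hconj hirr y with ⟨m, hm⟩ | ⟨m, hm⟩
    · have hαm_le_y : ⌊α * m⌋ ≤ y := hm ▸ Int.floor_le_floor (by gcongr)
      refine ⟨⌊α * m⌋₊, y, .inl ⟨?_, rfl⟩, .inr ((mem_union_zero_iff hS).2 ⟨m, hm⟩), m,
        .inl ⟨natCast_floor hα m, hm⟩⟩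
      zify
      rw [natCast_floor hα]
      omega
    · have hmn : m < n := (floor_mul_natCast_monotone hα).reflect_lt (hm ▸ hlt)
      refine ⟨⌊β * m⌋₊, y, .inl ⟨?_, rfl⟩, .inl ((mem_union_zero_iff hS).2 ⟨m, natCast_floor hβ m⟩),
        m, .inr ⟨natCast_floor hβ m, hm⟩⟩
      zify
      rw [natCast_floor hβ, hx]
      exact floor_mul_natCast_strictMono hconj.lt.le hmn
  · refine ⟨x, ⌊α * n⌋₊, .inr ⟨rfl, ?_⟩, .inl ((mem_union_zero_iff hS).2 ⟨n, hx⟩), n,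
      .inr ⟨hx, natCast_floor hα n⟩⟩
    zify
    rwa [natCast_floor hα]

/-- if a legal position of 2-pile S-Nim (Beatty case) is not
of the form `{⌊αn⌋, ⌊βn⌋}`, then there is a legal move to a position of that form. -/
theorem stmt7 (β : ℝ) (hβ : 2 < β) (hirr : Irrational β)
    (α : ℝ) (hα : 1 / α + 1 / β = 1)
    (S : Set ℕ) (hS : S = {m : ℕ | ∃ n : ℕ, 0 < n ∧ (m : ℤ) = ⌊β * n⌋})
    (x y : ℕ) (hleg : Legal S (x, y))
    (hform : ¬ ∃ n : ℕ, ((x : ℤ) = ⌊α * n⌋ ∧ (y : ℤ) = ⌊β * n⌋) ∨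
                        ((x : ℤ) = ⌊β * n⌋ ∧ (y : ℤ) = ⌊α * n⌋)) :
    ∃ x' y' : ℕ, Move (x, y) (x', y') ∧ Legal S (x', y') ∧
      ∃ m : ℕ, ((x' : ℤ) = ⌊α * m⌋ ∧ (y' : ℤ) = ⌊β * m⌋) ∨
               ((x' : ℤ) = ⌊β * m⌋ ∧ (y' : ℤ) = ⌊α * m⌋) := by
  have hconj : β.HolderConjugate α :=
    Real.holderConjugate_iff.2 ⟨by linarith, by simpa only [one_div, add_comm] using hα⟩
  have hαβ : α ≤ β := hconj.le_of_two_le hβ.le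
  rcases hleg with hx | hy
  · obtain ⟨n, hn⟩ := (mem_union_zero_iff hS).1 hx
    exact exists_move_to_isBeattyPosition hconj hαβ hirr hS hn
      fun hy => hform ⟨n, .inr ⟨hn, hy⟩⟩
  · obtain ⟨n, hn⟩ := (mem_union_zero_iff hS).1 hy
    obtain ⟨y', x', hmove, hlegal, hpos⟩ := exists_move_to_isBeattyPosition hconj hαβ hirr hS hn
      fun hx => hform ⟨n, .inl ⟨hx, hn⟩⟩
    exact ⟨x', y', hmove.swap_s7, Or.symm hlegal, hpos.swap_s7⟩
end
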